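/- Fix n ≥ 1, 0 < c < 1, and x ∈ ℝ. With N and D as follows: N(z, a) := ∫_{max spec M₁ ≤ −z} e^{−(1−c²) Tr M₁²/2} ( ∫_{max spec M₂ ≥ a} e^{−Tr(M₂ − c M₁)²/2} dM₂ ) dM₁ and D(z) := ∫_{max spec M₁ ≤ −z} e^{−(1−c²) Tr M₁²/2} ( ∫_{H_n} e^{−Tr(M₂ − c M₁)²/2} dM₂ ) dM₁, one has lim_{z→∞} N(z, x + z)/D(z) = 0; i.e., for the n-particle Dyson Brownian motion the conditional probability P(λ_n(t) ≥ x + z | λ_n(0) ≤ −z) tends to 0 as z → ∞. -/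

import Mathlib

/-!
Integrating out `M₂`, a translate of the Gaussian `e^{-Tr Y²/2}`, gives `D(z) = I(z) G`, where
`G` is the Gaussian mass and `I(z)` is the mass of `{max spec M₁ ≤ -z}` under
`e^{-(1-c²) Tr M₁²/2}`; `I(z) > 0` because, by Gershgorin, that set contains an open set.
For `M₂ = Y + c M₁` with `max spec M₁ ≤ -z`, Weyl's inequality turns `max spec M₂ ≥ a` into
`max spec Y ≥ a + c z`, so `N(z, x + z) ≤ T(x + (1 + c) z) I(z)`, where `T(a)` is the Gaussian
mass of `{max spec Y ≥ a}`; and `T(a) → 0` by dominated convergence.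
-/

open MeasureTheory Filter Topology

noncomputable section

/-- Coordinates for an `n×n` Hermitian matrix: diagonal (real) and strictly
upper-triangular (complex) entries; `volume` on them is the Lebesgue (additive
Haar) measure on the space `H_n` of Hermitian matrices. -/
abbrev HermCoords (n : ℕ) : Type :=
  (Fin n → ℝ) × ({p : Fin n × Fin n // p.1 < p.2} → ℂ)

/-- The Hermitian matrix determined by the coordinates. -/
def matrixOf {n : ℕ} (M : HermCoords n) : Matrix (Fin n) (Fin n) ℂ :=
  fun i j =>
    if h : i < j then M.2 ⟨(i, j), h⟩
    else if h' : j < i then star (M.2 ⟨(j, i), h'⟩)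
    else (M.1 i : ℂ)

/-- Real part of the trace. -/
def reTr {n : ℕ} (A : Matrix (Fin n) (Fin n) ℂ) : ℝ := (Matrix.trace A).re

/-- `max spec M ≤ w` (all eigenvalues of the Hermitian matrix at most `w`). -/
def maxSpecLE {n : ℕ} (M : HermCoords n) (w : ℝ) : Prop :=
  ∀ μ ∈ spectrum ℂ (matrixOf M), μ.re ≤ w

/-- `max spec M ≥ w` (largest eigenvalue at least `w`). -/
def maxSpecGE {n : ℕ} (M : HermCoords n) (w : ℝ) : Prop :=
  ∃ μ ∈ spectrum ℂ (matrixOf M), w ≤ μ.re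

/-- `N(z,a) = ∫_{max spec M₁ ≤ −z} e^{−(1−c²)Tr M₁²/2}
      ∫_{max spec M₂ ≥ a} e^{−Tr(M₂−cM₁)²/2} dM₂ dM₁`. -/
def Nint (n : ℕ) (c z a : ℝ) : ℝ :=
  ∫ M₁ : HermCoords n,
    Set.indicator {M : HermCoords n | maxSpecLE M (-z)}
      (fun M₁ => Real.exp (-(1 - c ^ 2) * reTr (matrixOf M₁ * matrixOf M₁) / 2) *
        ∫ M₂ : HermCoords n,
          Set.indicator {M : HermCoords n | maxSpecGE M a}
            (fun M₂ => Real.exp (-reTr ((matrixOf M₂ - (c : ℂ) • matrixOf M₁) *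
              (matrixOf M₂ - (c : ℂ) • matrixOf M₁)) / 2)) M₂) M₁

/-- `D(z) = ∫_{max spec M₁ ≤ −z} e^{−(1−c²)Tr M₁²/2} ∫_{H_n} e^{−Tr(M₂−cM₁)²/2} dM₂ dM₁`. -/
def Dint (n : ℕ) (c z : ℝ) : ℝ :=
  ∫ M₁ : HermCoords n,
    Set.indicator {M : HermCoords n | maxSpecLE M (-z)}
      (fun M₁ => Real.exp (-(1 - c ^ 2) * reTr (matrixOf M₁ * matrixOf M₁) / 2) *
        ∫ M₂ : HermCoords n,
          Real.exp (-reTr ((matrixOf M₂ - (c : ℂ) • matrixOf M₁) *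
            (matrixOf M₂ - (c : ℂ) • matrixOf M₁)) / 2)) M₁

open scoped ComplexOrder

lemma Set.Finite.exists_lt_forall_le {α β : Type*} [TopologicalSpace β] [LinearOrder β]
    [OrderTopology β] [DenselyOrdered β] [NoMinOrder β] {s : Set α} (hs : s.Finite)
    {f : α → β} {a : β} (h : ∀ x ∈ s, f x < a) : ∃ w < a, ∀ x ∈ s, f x ≤ w := by
  have : ∀ᶠ w in 𝓝[<] a, ∀ x ∈ s, f x ≤ w :=
    (eventually_all_finite hs).2 fun x hx =>
      eventually_of_mem (Ioo_mem_nhdsLT (h x hx)) fun _ hw => hw.1.le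
  obtain ⟨w, hw, hwa⟩ := (this.and self_mem_nhdsWithin).exists
  exact ⟨w, hwa, hw⟩

lemma integrable_exp_neg_mul_sq_norm {V : Type*} [NormedAddCommGroup V] [InnerProductSpace ℝ V]
    [FiniteDimensional ℝ V] [MeasurableSpace V] [BorelSpace V] {b : ℝ} (hb : 0 < b) :
    Integrable (fun v : V => Real.exp (-b * ‖v‖ ^ 2)) := by
  have := (GaussianFourier.integrable_cexp_neg_mul_sq_norm_add (V := V) (b := b)
    (by simpa) 0 0).norm
  convert this using 2 with v
  simp [Complex.norm_exp, sq]

lemma setIntegral_pos_of_isOpen {X : Type*} [TopologicalSpace X] [MeasurableSpace X]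
    [OpensMeasurableSpace X] {μ : Measure X} [μ.IsOpenPosMeasure] {f : X → ℝ}
    (hf : Integrable f μ) (hpos : ∀ x, 0 < f x) {U : Set X} (hU : IsOpen U)
    (hne : U.Nonempty) : 0 < ∫ x in U, f x ∂μ := by
  rw [setIntegral_pos_iff_support_of_nonneg_ae (ae_of_all _ fun x => (hpos x).le)
    hf.integrableOn]
  simpa [Function.support, (hpos _).ne'] using hU.measure_pos μ hne

namespace Matrix

variable {ι : Type*} [Fintype ι] [DecidableEq ι]

lemma IsHermitian.real_smul_one_sub {A : Matrix ι ι ℂ} (hA : A.IsHermitian) (w : ℝ) :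
    ((w : ℂ) • 1 - A).IsHermitian := by
  rw [← Algebra.algebraMap_eq_smul_one]
  exact (IsSelfAdjoint.algebraMap _ (Complex.conj_ofReal w)).sub hA

lemma IsHermitian.posSemidef_real_smul_one_sub_iff {A : Matrix ι ι ℂ} (hA : A.IsHermitian)
    (w : ℝ) : ((w : ℂ) • 1 - A).PosSemidef ↔ ∀ μ ∈ spectrum ℂ A, μ.re ≤ w := by
  rw [posSemidef_iff_isHermitian_and_spectrum_nonneg, and_iff_right (hA.real_smul_one_sub w),
    ← Algebra.algebraMap_eq_smul_one, ← spectrum.singleton_sub_eq, hA.spectrum_eq_image_range]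
  simp [Set.subset_def]

lemma exists_re_le_of_mem_spectrum {A : Matrix ι ι ℂ} {μ : ℂ} (hμ : μ ∈ spectrum ℂ A) :
    ∃ k, μ.re ≤ (A k k).re + ∑ j ∈ Finset.univ.erase k, ‖A k j‖ := by
  rw [← spectrum_toLin', ← Module.End.hasEigenvalue_iff_mem_spectrum] at hμ
  obtain ⟨k, hk⟩ := eigenvalue_mem_ball hμ
  have := (Complex.re_le_norm (μ - A k k)).trans (mem_closedBall_iff_norm.1 hk)
  rw [Complex.sub_re] at this
  exact ⟨k, by linarith⟩

end Matrix

namespace HermCoords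

variable {n : ℕ}

def matrixOfₗ : HermCoords n →ₗ[ℝ] Matrix (Fin n) (Fin n) ℂ where
  toFun := matrixOf
  map_add' M N := by
    ext i j
    simp only [matrixOf, Matrix.add_apply]
    split_ifs <;> simp
  map_smul' c M := by
    ext i j
    simp only [matrixOf, Matrix.smul_apply, RingHom.id_apply]
    split_ifs <;> simp [Complex.real_smul]

lemma matrixOf_add (M N : HermCoords n) : matrixOf (M + N) = matrixOf M + matrixOf N :=
  matrixOfₗ.map_add M N

lemma matrixOf_sub (M N : HermCoords n) : matrixOf (M - N) = matrixOf M - matrixOf N :=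
  matrixOfₗ.map_sub M N

lemma matrixOf_smul (c : ℝ) (M : HermCoords n) : matrixOf (c • M) = (c : ℂ) • matrixOf M :=
  (matrixOfₗ.map_smul c M).trans (Complex.coe_smul c _).symm

@[fun_prop]
lemma continuous_matrixOf : Continuous (matrixOf : HermCoords n → Matrix (Fin n) (Fin n) ℂ) :=
  matrixOfₗ.continuous_of_finiteDimensional

lemma isHermitian_matrixOf (M : HermCoords n) : (matrixOf M).IsHermitian := by
  ext i j
  rcases lt_trichotomy i j with h | rfl | h
  · simp [matrixOf, h, asymm h]
  · simp [matrixOf]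
  · simp [matrixOf, h, asymm h]

instance : (volume : Measure (HermCoords n)).IsAddRightInvariant :=
  Measure.prod.instIsAddRightInvariant

lemma maxSpecLE_iff_posSemidef (M : HermCoords n) (w : ℝ) :
    maxSpecLE M w ↔ ((w : ℂ) • 1 - matrixOf M).PosSemidef :=
  ((isHermitian_matrixOf M).posSemidef_real_smul_one_sub_iff w).symm

lemma maxSpecLE_mono {M : HermCoords n} {w w' : ℝ} (h : maxSpecLE M w) (hw : w ≤ w') :
    maxSpecLE M w' :=
  fun μ hμ => (h μ hμ).trans hw

lemma maxSpecLE_add {P Q : HermCoords n} {w b : ℝ} (hP : maxSpecLE P w) (hQ : maxSpecLE Q b) :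
    maxSpecLE (P + Q) (w + b) := by
  rw [maxSpecLE_iff_posSemidef] at *
  convert hP.add hQ using 1
  rw [matrixOf_add]
  push_cast
  module

lemma maxSpecLE_smul {M : HermCoords n} {w c : ℝ} (hM : maxSpecLE M w) (hc : 0 ≤ c) :
    maxSpecLE (c • M) (c * w) := by
  rw [maxSpecLE_iff_posSemidef] at *
  convert hM.smul (Complex.zero_le_real.2 hc) using 1
  rw [matrixOf_smul]
  push_cast
  module

lemma isClosed_setOf_maxSpecLE (w : ℝ) : IsClosed {M : HermCoords n | maxSpecLE M w} := by
  simp_rw [maxSpecLE_iff_posSemidef, Matrix.posSemidef_iff_dotProduct_mulVec,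
    (isHermitian_matrixOf _).real_smul_one_sub w, true_and, Set.ofPred_forall]
  exact isClosed_iInter fun x => isClosed_le continuous_const (by fun_prop)

lemma maxSpecGE_iff_forall_not_maxSpecLE (M : HermCoords n) (a : ℝ) :
    maxSpecGE M a ↔ ∀ w < a, ¬ maxSpecLE M w := by
  refine ⟨fun ⟨μ, hμ, haμ⟩ w hw hM => (hw.trans_le (haμ.trans (hM μ hμ))).false, ?_⟩
  contrapose!
  intro h
  exact (Matrix.finite_spectrum _).exists_lt_forall_le (f := Complex.re)
    (by simpa [maxSpecGE] using h)

lemma maxSpecGE_of_add {P Q : HermCoords n} {a b : ℝ} (h : maxSpecGE (P + Q) a)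
    (hQ : maxSpecLE Q b) : maxSpecGE P (a - b) := by
  rw [maxSpecGE_iff_forall_not_maxSpecLE] at *
  exact fun w hw hP => h (w + b) (by linarith) (maxSpecLE_add hP hQ)

lemma measurableSet_setOf_maxSpecGE (a : ℝ) :
    MeasurableSet {M : HermCoords n | maxSpecGE M a} := by
  have : {M : HermCoords n | maxSpecGE M a} =
      ⋂ (q : ℚ) (_ : (q : ℝ) < a), {M | maxSpecLE M q}ᶜ := by
    ext M
    simp only [maxSpecGE_iff_forall_not_maxSpecLE, Set.mem_ofPred_eq, Set.mem_iInter,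
      Set.mem_compl_iff]
    refine ⟨fun h q hq => h q hq, fun h w hw hM => ?_⟩
    obtain ⟨q, hwq, hqa⟩ := exists_rat_btwn hw
    exact h q hqa (maxSpecLE_mono hM hwq.le)
  rw [this]
  exact .iInter fun q => .iInter fun _ => (isClosed_setOf_maxSpecLE _).measurableSet.compl

lemma eventually_not_maxSpecGE (M : HermCoords n) : ∀ᶠ a in atTop, ¬ maxSpecGE M a := by
  obtain ⟨w, hw⟩ := ((Matrix.finite_spectrum (matrixOf M)).image Complex.re).bddAbove
  filter_upwards [eventually_gt_atTop w] with a ha ⟨μ, hμ, haμ⟩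
  linarith [hw ⟨μ, hμ, rfl⟩]

lemma maxSpecLE_neg_of_forall_lt (z : ℝ) {M : HermCoords n} (hdiag : ∀ i, M.1 i < -z - n)
    (hoff : ∀ p, ‖M.2 p‖ < 1) : maxSpecLE M (-z) := by
  intro μ hμ
  obtain ⟨k, hk⟩ := Matrix.exists_re_le_of_mem_spectrum hμ
  have hsum : ∑ j ∈ Finset.univ.erase k, ‖matrixOf M k j‖ ≤ n := by
    refine (Finset.sum_le_card_nsmul _ _ 1 fun j hj => ?_).trans (by simp)
    rcases lt_or_gt_of_ne (Finset.ne_of_mem_erase hj) with h | h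
    · simpa [matrixOf, h, asymm h] using (hoff _).le
    · simpa [matrixOf, h, asymm h] using (hoff _).le
  have hkk : (matrixOf M k k).re = M.1 k := by simp [matrixOf]
  linarith [hdiag k]

def trSq (M : HermCoords n) : ℝ := reTr (matrixOf M * matrixOf M)

lemma trSq_eq (M : HermCoords n) : trSq M = ∑ i, M.1 i ^ 2 + 2 * ∑ p, ‖M.2 p‖ ^ 2 := by
  set F : Fin n → Fin n → ℝ := fun i j => ‖matrixOf M i j‖ ^ 2
  have htr : trSq M = ∑ i, ∑ j, F i j := by
    rw [trSq, reTr, Matrix.trace, Complex.re_sum]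
    refine Finset.sum_congr rfl fun i _ => ?_
    rw [Matrix.diag_apply, Matrix.mul_apply, Complex.re_sum]
    refine Finset.sum_congr rfl fun j _ => ?_
    rw [← (isHermitian_matrixOf M).apply j i, Complex.star_def, Complex.mul_conj',
      ← Complex.ofReal_pow, Complex.ofReal_re]
  have hdiag : ∑ i, ∑ j, (if j = i then F i j else 0) = ∑ i, M.1 i ^ 2 := by
    simp [F, matrixOf]
  have hupper : ∑ i, ∑ j, (if i < j then F i j else 0) = ∑ p, ‖M.2 p‖ ^ 2 := by
    rw [← Fintype.sum_prod_type' (f := fun i j => if i < j then F i j else 0),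
      ← Finset.sum_filter,
      Finset.sum_subtype (p := fun q : Fin n × Fin n => q.1 < q.2) _ (fun q => by simp)]
    exact Finset.sum_congr rfl fun p _ => by simp [F, matrixOf, p.2]
  have hlower :
      ∑ i, ∑ j, (if j < i then F i j else 0) = ∑ i, ∑ j, (if i < j then F i j else 0) := by
    rw [Finset.sum_comm]
    refine Finset.sum_congr rfl fun i _ => Finset.sum_congr rfl fun j _ => ?_
    simp only [F, ← (isHermitian_matrixOf M).apply i j, norm_star]
  calc trSq M = ∑ i, ∑ j, ((if j = i then F i j else 0) + (if i < j then F i j else 0) +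
        (if j < i then F i j else 0)) := by
        rw [htr]
        refine Finset.sum_congr rfl fun i _ => Finset.sum_congr rfl fun j _ => ?_
        rcases lt_trichotomy i j with h | rfl | h
        · simp [h, h.ne', asymm h]
        · simp
        · simp [h, h.ne, asymm h]
    _ = _ := by simp only [Finset.sum_add_distrib, hdiag, hupper, hlower]; ring

def gaussian (b : ℝ) (M : HermCoords n) : ℝ := Real.exp (-b * trSq M / 2)

lemma gaussian_pos (b : ℝ) (M : HermCoords n) : 0 < gaussian b M := Real.exp_pos _

lemma gaussian_eq_prod (b : ℝ) (M : HermCoords n) :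
    gaussian b M =
      (∏ i, Real.exp (-(b / 2) * M.1 i ^ 2)) * ∏ p, Real.exp (-b * ‖M.2 p‖ ^ 2) := by
  rw [gaussian, trSq_eq, ← Real.exp_sum, ← Real.exp_sum, ← Real.exp_add, ← Finset.mul_sum,
    ← Finset.mul_sum]
  ring_nf

lemma integrable_gaussian {b : ℝ} (hb : 0 < b) :
    Integrable (gaussian b : HermCoords n → ℝ) := by
  rw [funext (gaussian_eq_prod b), Measure.volume_eq_prod]
  exact (Integrable.fintype_prod (f := fun _ t => Real.exp (-(b / 2) * t ^ 2))
    fun _ => integrable_exp_neg_mul_sq (half_pos hb)).mul_prod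
    (Integrable.fintype_prod (f := fun _ z => Real.exp (-b * ‖z‖ ^ 2))
    fun _ => integrable_exp_neg_mul_sq_norm hb)

lemma exp_neg_reTr_sq_sub_smul (c : ℝ) (M₁ M₂ : HermCoords n) :
    Real.exp (-reTr ((matrixOf M₂ - (c : ℂ) • matrixOf M₁) *
      (matrixOf M₂ - (c : ℂ) • matrixOf M₁)) / 2) = gaussian 1 (M₂ - c • M₁) := by
  rw [gaussian, trSq, matrixOf_sub, matrixOf_smul, neg_one_mul]

def gaussianUpperTail (n : ℕ) (a : ℝ) : ℝ :=
  ∫ M : HermCoords n, {M | maxSpecGE M a}.indicator (gaussian 1) M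

def gaussianLowerTail (n : ℕ) (b z : ℝ) : ℝ :=
  ∫ M : HermCoords n, {M | maxSpecLE M (-z)}.indicator (gaussian b) M

lemma tendsto_gaussianUpperTail : Tendsto (gaussianUpperTail n) atTop (𝓝 0) := by
  have h := tendsto_integral_filter_of_dominated_convergence (gaussian 1)
    (.of_forall fun a => ((integrable_gaussian one_pos).indicator
      (measurableSet_setOf_maxSpecGE a)).aestronglyMeasurable)
    (.of_forall fun a => ae_of_all _ fun M => (norm_indicator_le_norm_self _ M).trans_eq
      (Real.norm_of_nonneg (gaussian_pos 1 M).le))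
    (integrable_gaussian one_pos)
    (ae_of_all _ fun M => tendsto_const_nhds.congr'
      ((eventually_not_maxSpecGE M).mono fun a ha =>
        (Set.indicator_of_notMem (s := {M : HermCoords n | maxSpecGE M a}) ha _).symm))
  rw [integral_zero] at h
  exact h

lemma gaussianLowerTail_pos {b : ℝ} (hb : 0 < b) (z : ℝ) : 0 < gaussianLowerTail n b z := by
  rw [gaussianLowerTail, integral_indicator (isClosed_setOf_maxSpecLE _).measurableSet]
  let U := {M : HermCoords n | (∀ i, M.1 i < -z - n) ∧ ∀ p, ‖M.2 p‖ < 1}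
  have hU : IsOpen U := by
    simp only [U, Set.ofPred_and, Set.ofPred_forall]
    exact (isOpen_iInter_of_finite fun i => isOpen_lt (by fun_prop) continuous_const).inter
      (isOpen_iInter_of_finite fun p => isOpen_lt (by fun_prop) continuous_const)
  have hne : U.Nonempty := ⟨(fun _ => -z - n - 1, 0), by simp [U]⟩
  exact (setIntegral_pos_of_isOpen (integrable_gaussian hb) (gaussian_pos b) hU hne).trans_le
    (setIntegral_mono_set (integrable_gaussian hb).integrableOn
      (ae_of_all _ fun M => (gaussian_pos b M).le)
      (ae_of_all _ fun M hM => maxSpecLE_neg_of_forall_lt z hM.1 hM.2))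

lemma integral_indicator_exp_sub_smul_le {c z : ℝ} (hc : 0 ≤ c) {M₁ : HermCoords n}
    (hM₁ : maxSpecLE M₁ (-z)) (a : ℝ) :
    ∫ M₂ : HermCoords n, {M | maxSpecGE M a}.indicator
      (fun M₂ => Real.exp (-reTr ((matrixOf M₂ - (c : ℂ) • matrixOf M₁) *
        (matrixOf M₂ - (c : ℂ) • matrixOf M₁)) / 2)) M₂ ≤
      gaussianUpperTail n (a + c * z) := by
  simp_rw [exp_neg_reTr_sq_sub_smul]
  rw [← integral_add_right_eq_self _ (c • M₁)]
  refine integral_mono_of_nonneg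
    (ae_of_all _ fun Y => Set.indicator_nonneg (fun _ _ => (gaussian_pos _ _).le) _)
    ((integrable_gaussian one_pos).indicator (measurableSet_setOf_maxSpecGE _))
    (ae_of_all _ fun Y => ?_)
  by_cases hY : maxSpecGE (Y + c • M₁) a
  · have hY' : maxSpecGE Y (a + c * z) := by
      simpa using maxSpecGE_of_add hY (maxSpecLE_smul hM₁ hc)
    simp [hY, hY']
  · simp [hY, Set.indicator_nonneg (fun _ _ => (gaussian_pos _ _).le)]

lemma Dint_eq (c z : ℝ) :
    Dint n c z = gaussianLowerTail n (1 - c ^ 2) z * ∫ M : HermCoords n, gaussian 1 M := by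
  have hinner (M₁ : HermCoords n) : ∫ M₂ : HermCoords n,
      Real.exp (-reTr ((matrixOf M₂ - (c : ℂ) • matrixOf M₁) *
        (matrixOf M₂ - (c : ℂ) • matrixOf M₁)) / 2) =
      ∫ M : HermCoords n, gaussian 1 M := by
    simp_rw [exp_neg_reTr_sq_sub_smul]
    exact integral_sub_right_eq_self _ _
  simp_rw [Dint, hinner, Set.indicator_mul_const]
  exact integral_mul_const _ _

lemma Nint_nonneg (c z a : ℝ) : 0 ≤ Nint n c z a :=
  integral_nonneg fun _ => Set.indicator_nonneg (fun _ _ => mul_nonneg (Real.exp_pos _).le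
    (integral_nonneg fun _ => Set.indicator_nonneg (fun _ _ => (Real.exp_pos _).le) _)) _

lemma Nint_le {c : ℝ} (hc0 : 0 ≤ c) (hc1 : c < 1) (z a : ℝ) :
    Nint n c z a ≤ gaussianUpperTail n (a + c * z) * gaussianLowerTail n (1 - c ^ 2) z := by
  rw [gaussianLowerTail, ← integral_const_mul]
  refine integral_mono_of_nonneg (ae_of_all _ fun M₁ => ?_)
    (((integrable_gaussian (by nlinarith)).indicator
      (isClosed_setOf_maxSpecLE _).measurableSet).const_mul _) (ae_of_all _ fun M₁ => ?_)
  · exact Set.indicator_nonneg (fun _ _ => mul_nonneg (Real.exp_pos _).le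
      (integral_nonneg fun _ => Set.indicator_nonneg (fun _ _ => (Real.exp_pos _).le) _)) _
  by_cases h : maxSpecLE M₁ (-z)
  · simp only [Set.indicator_of_mem (show M₁ ∈ {M | maxSpecLE M (-z)} from h)]
    rw [mul_comm]
    exact mul_le_mul_of_nonneg_right (integral_indicator_exp_sub_smul_le hc0 h a)
      (gaussian_pos _ _).le
  · simp [h]

end HermCoords

open HermCoords in
theorem dyson_nonexplosion_general (n : ℕ) (c : ℝ) (hc0 : 0 < c) (hc1 : c < 1)
    (x : ℝ) :
    Tendsto (fun z : ℝ => Nint n c z (x + z) / Dint n c z) atTop (𝓝 0) := by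
  set G := ∫ M : HermCoords n, gaussian 1 M
  have hG : 0 < G := by
    simpa using setIntegral_pos_of_isOpen (integrable_gaussian one_pos) (gaussian_pos 1)
      isOpen_univ Set.univ_nonempty
  have hI (z : ℝ) : 0 < gaussianLowerTail n (1 - c ^ 2) z :=
    gaussianLowerTail_pos (by nlinarith) z
  have hD (z : ℝ) : 0 < Dint n c z := Dint_eq c z ▸ mul_pos (hI z) hG
  have hlim : Tendsto (fun z => x + z + c * z) atTop atTop :=
    (tendsto_atTop_add_const_left _ x (tendsto_id.const_mul_atTop (by linarith : 0 < 1 + c))).congr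
      fun z => by simp only [id]; ring
  refine squeeze_zero (fun z => div_nonneg (Nint_nonneg c z _) (hD z).le) (fun z => ?_)
    (by simpa using ((tendsto_gaussianUpperTail (n := n)).comp hlim).div_const G)
  calc Nint n c z (x + z) / Dint n c z
      ≤ gaussianUpperTail n (x + z + c * z) * gaussianLowerTail n (1 - c ^ 2) z / Dint n c z :=
        div_le_div_of_nonneg_right (Nint_le hc0.le hc1 z (x + z)) (hD z).le
    _ = gaussianUpperTail n (x + z + c * z) / G := by
        rw [Dint_eq, mul_comm (gaussianUpperTail _ _)]
        exact mul_div_mul_left _ _ (hI z).ne'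

/-- **Nonexplosion for the Dyson process (Appendix).**  For the `n`-particle
Dyson Brownian motion, `P(λ_n(t) ≥ x + z | λ_n(0) ≤ −z) → 0` as `z → ∞`. -/
theorem dyson_nonexplosion (n : ℕ) (hn : 1 ≤ n) (c : ℝ) (hc0 : 0 < c) (hc1 : c < 1)
    (x : ℝ) :
    Tendsto (fun z : ℝ => Nint n c z (x + z) / Dint n c z) atTop (𝓝 0) :=
  dyson_nonexplosion_general n c hc0 hc1 x

end
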